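/- Suppose u_h^{k+1}, u_h^k belong to an affine finite-dimensional subspace V_h^g of V^g and satisfy the semi-implicit gradient flow step (1/τ)⟨u_h^{k+1} − u_h^k, v⟩_{H^α(Ω)} = −a_{u_h^k}(u_h^{k+1}, v) for all v ∈ V_h^0 with τ > 0. Then I_s[u_h^{k+1}] + (1/τ)‖u_h^{k+1} − u_h^k‖²_{H^α(Ω)} ≤ I_s[u_h^k]. -/

import Mathlib

/-!
Write `F ρ = ∫₀^ρ (ρ - r) g r dr` and `G ρ = ∫₀¹ g (ρ r) dr` for an even kernel `g ≥ 0` that decreases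
on `[0, ∞)`. Then `F' ρ = ρ G ρ` with `G` even and decreasing in `|ρ|`, so `ρ ↦ F ρ - G r₀ ρ² / 2` is even
and maximal at `ρ = ±r₀`. This gives `F r₁ - F r₀ ≤ G r₀ (r₁² - r₀²) / 2 ≤ G r₀ (r₁² - r₁ r₀)`. Applied
pointwise to the difference quotients of `u₀, u₁` and integrated, this bounds `I_s[u₁]` by
`I_s[u₀] + a_{u₀}(u₁, u₁ - u₀)`, and testing the flow step with `v = u₁ - u₀` finishes the proof.
-/

open MeasureTheory Real Set intervalIntegral

noncomputable def secondPrimitive (g : ℝ → ℝ) (ρ : ℝ) : ℝ := ∫ r in (0:ℝ)..ρ, (ρ - r) * g r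

noncomputable def segmentMean (g : ℝ → ℝ) (ρ : ℝ) : ℝ := ∫ r in (0:ℝ)..1, g (ρ * r)

section Kernel

variable {g : ℝ → ℝ}

lemma secondPrimitive_eq_mul_integral_sub (hg : Continuous g) (ρ : ℝ) :
    secondPrimitive g ρ = ρ * (∫ r in (0:ℝ)..ρ, g r) - ∫ r in (0:ℝ)..ρ, r * g r := by
  have hρg : Continuous fun r => ρ * g r := continuous_const.mul hg
  have hrg : Continuous fun r => r * g r := continuous_id.mul hg
  simp only [secondPrimitive, sub_mul]
  rw [integral_sub (hρg.intervalIntegrable _ _) (hrg.intervalIntegrable _ _),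
    intervalIntegral.integral_const_mul]

lemma hasDerivAt_secondPrimitive (hg : Continuous g) (x : ℝ) :
    HasDerivAt (secondPrimitive g) (∫ r in (0:ℝ)..x, g r) x := by
  rw [funext (secondPrimitive_eq_mul_integral_sub hg)]
  refine (((hasDerivAt_id x).mul (hg.integral_hasStrictDerivAt 0 x).hasDerivAt).sub
    ((continuous_id.mul hg).integral_hasStrictDerivAt 0 x).hasDerivAt).congr_deriv ?_
  simp

lemma integral_eq_mul_segmentMean (x : ℝ) : ∫ r in (0:ℝ)..x, g r = x * segmentMean g x := by
  rw [segmentMean, mul_integral_comp_mul_left]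
  simp

lemma secondPrimitive_neg (heven : g.Even) (ρ : ℝ) :
    secondPrimitive g (-ρ) = secondPrimitive g ρ := by
  have h := integral_comp_neg (a := 0) (b := ρ) fun r => (-ρ - r) * g r
  simp only [neg_zero, heven _] at h
  rw [secondPrimitive, secondPrimitive, integral_symm, ← h, ← intervalIntegral.integral_neg]
  congr 1 with r
  ring

lemma secondPrimitive_abs (heven : g.Even) (ρ : ℝ) :
    secondPrimitive g |ρ| = secondPrimitive g ρ := by
  rcases abs_choice ρ with h | h <;> simp only [h, secondPrimitive_neg heven]

lemma segmentMean_abs (heven : g.Even) (ρ : ℝ) : segmentMean g |ρ| = segmentMean g ρ := by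
  rcases abs_choice ρ with h | h <;> simp only [h, segmentMean, neg_mul, heven _]

lemma segmentMean_nonneg (hnonneg : ∀ x, 0 ≤ g x) (ρ : ℝ) : 0 ≤ segmentMean g ρ :=
  integral_nonneg zero_le_one fun _ _ => hnonneg _

lemma segmentMean_antitoneOn (hg : Continuous g) (hanti : AntitoneOn g (Ici 0)) :
    AntitoneOn (segmentMean g) (Ici 0) := by
  intro x hx y hy hxy
  refine integral_mono_on zero_le_one ((hg.comp (continuous_const_mul y)).intervalIntegrable _ _)
    ((hg.comp (continuous_const_mul x)).intervalIntegrable _ _) fun r hr => ?_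
  exact hanti (mul_nonneg hx hr.1) (mul_nonneg hy hr.1) (mul_le_mul_of_nonneg_right hxy hr.1)

lemma secondPrimitive_sub_le_of_nonneg (hg : Continuous g) (hanti : AntitoneOn g (Ici 0))
    {a b : ℝ} (ha : 0 ≤ a) (hb : 0 ≤ b) :
    secondPrimitive g b - secondPrimitive g a ≤ segmentMean g a * (b ^ 2 - a ^ 2) / 2 := by
  set D : ℝ → ℝ := fun x => secondPrimitive g x - segmentMean g a * x ^ 2 / 2
  have hD : ∀ x, HasDerivAt D (x * (segmentMean g x - segmentMean g a)) x := fun x => by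
    refine ((hasDerivAt_secondPrimitive hg x).sub (((hasDerivAt_pow 2 x).const_mul
      (segmentMean g a)).div_const 2)).congr_deriv ?_
    rw [integral_eq_mul_segmentMean]
    ring
  have hDcont : Continuous D := continuous_iff_continuousAt.2 fun x => (hD x).continuousAt
  have hmean := segmentMean_antitoneOn hg hanti
  suffices D b ≤ D a by simp only [D] at this; linarith
  rcases le_total b a with hba | hab
  · refine monotoneOn_of_hasDerivWithinAt_nonneg (convex_Icc 0 a) hDcont.continuousOn
      (fun x _ => (hD x).hasDerivWithinAt) (fun x hx => ?_) ⟨hb, hba⟩ ⟨ha, le_rfl⟩ hba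
    rw [interior_Icc] at hx
    exact mul_nonneg hx.1.le (sub_nonneg.2 (hmean hx.1.le ha hx.2.le))
  · refine antitoneOn_of_hasDerivWithinAt_nonpos (convex_Ici a) hDcont.continuousOn
      (fun x _ => (hD x).hasDerivWithinAt) (fun x hx => ?_) self_mem_Ici hab hab
    rw [interior_Ici] at hx
    have hx0 : 0 ≤ x := ha.trans hx.le
    exact mul_nonpos_of_nonneg_of_nonpos hx0 (sub_nonpos.2 (hmean ha hx0 hx.le))

theorem secondPrimitive_sub_le (hg : Continuous g) (heven : g.Even)
    (hanti : AntitoneOn g (Ici 0)) (hnonneg : ∀ x, 0 ≤ g x) (r₀ r₁ : ℝ) :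
    secondPrimitive g r₁ - secondPrimitive g r₀ ≤ (r₁ ^ 2 - r₁ * r₀) * segmentMean g r₀ := by
  have h := secondPrimitive_sub_le_of_nonneg hg hanti (abs_nonneg r₀) (abs_nonneg r₁)
  rw [secondPrimitive_abs heven, secondPrimitive_abs heven, segmentMean_abs heven, sq_abs,
    sq_abs] at h
  nlinarith [mul_nonneg (segmentMean_nonneg hnonneg r₀) (sq_nonneg (r₁ - r₀))]

end Kernel

lemma secondPrimitive_one_add_sq_rpow_neg_sub_le {p : ℝ} (hp : 0 ≤ p) (r₀ r₁ : ℝ) :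
    secondPrimitive (fun r => (1 + r ^ 2) ^ (-p)) r₁ -
        secondPrimitive (fun r => (1 + r ^ 2) ^ (-p)) r₀ ≤
      (r₁ ^ 2 - r₁ * r₀) * segmentMean (fun r => (1 + r ^ 2) ^ (-p)) r₀ := by
  refine secondPrimitive_sub_le ?_ (fun x => by simp only [even_two, Even.neg_pow])
    (fun x hx _ _ hxy => rpow_le_rpow_of_nonpos (by positivity) (by gcongr) (neg_nonpos.2 hp))
    (fun x => rpow_nonneg (by positivity) _) r₀ r₁
  exact (continuous_const.add (continuous_pow 2)).rpow_const fun r =>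
    Or.inl (by positivity : (0:ℝ) < 1 + r ^ 2).ne'

lemma mul_rpow_le_of_sub_le {F G : ℝ → ℝ} (hFG : ∀ r₀ r₁, F r₁ - F r₀ ≤ (r₁ ^ 2 - r₁ * r₀) * G r₀)
    (hF0 : F 0 = 0) {X : Type*} [MetricSpace X] (u₀ u₁ : X → ℝ) (x y : X) {q q' : ℝ}
    (hq : q' = q + 2) :
    F ((u₁ x - u₁ y) / dist x y) * dist x y ^ q' ≤
      F ((u₀ x - u₀ y) / dist x y) * dist x y ^ q' +
        G ((u₀ x - u₀ y) / dist x y) * ((u₁ x - u₁ y) * ((u₁ x - u₀ x) - (u₁ y - u₀ y))) *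
          dist x y ^ q := by
  rcases eq_or_ne x y with rfl | hxy
  · -- on the diagonal both difference quotients are the junk value `0 / 0 = 0`
    simp [hF0]
  have hδ : 0 < dist x y := dist_pos.2 hxy
  set δ := dist x y
  set R₀ := (u₀ x - u₀ y) / δ
  set R₁ := (u₁ x - u₁ y) / δ
  have h₀ : u₀ x - u₀ y = R₀ * δ := (div_mul_cancel₀ _ hδ.ne').symm
  have h₁ : u₁ x - u₁ y = R₁ * δ := (div_mul_cancel₀ _ hδ.ne').symm
  have hpow : δ ^ q' = δ ^ q * δ ^ 2 := by
    rw [hq, rpow_add hδ, rpow_two]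
  have hcross : (u₁ x - u₁ y) * ((u₁ x - u₀ x) - (u₁ y - u₀ y)) = (R₁ ^ 2 - R₁ * R₀) * δ ^ 2 := by
    rw [show (u₁ x - u₀ x) - (u₁ y - u₀ y) = (u₁ x - u₁ y) - (u₀ x - u₀ y) by ring, h₀, h₁]
    ring
  rw [hcross, ← sub_nonneg]
  have := mul_le_mul_of_nonneg_right (hFG R₀ R₁) (rpow_nonneg hδ.le q')
  rw [hpow] at this ⊢
  nlinarith

theorem gradient_flow_stability_general (d : ℕ) (s : ℝ) (hs : s ∈ Set.Ioo (0:ℝ) (1/2))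
    (F Gt : ℝ → ℝ)
    (hF : ∀ ρ : ℝ, F ρ = ∫ r in (0:ℝ)..ρ, (ρ - r) / (1 + r^2) ^ (((d:ℝ) + 1 + 2*s)/2))
    (hGt : ∀ ρ : ℝ, Gt ρ = ∫ r in (0:ℝ)..1, (1 + ρ^2 * r^2) ^ (-((d:ℝ) + 1 + 2*s)/2))
    -- QΩ = (ℝ^d × ℝ^d) \ (Ω^c × Ω^c)
    (QΩ : Set (EuclideanSpace ℝ (Fin d) × EuclideanSpace ℝ (Fin d)))
    -- the nonlocal energy and form
    (Is : (EuclideanSpace ℝ (Fin d) → ℝ) → ℝ)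
    (hIs : ∀ u, Is u =
      ∫ z in QΩ, F ((u z.1 - u z.2) / dist z.1 z.2) * (dist z.1 z.2) ^ (1 - (d:ℝ) - 2*s))
    (a : (EuclideanSpace ℝ (Fin d) → ℝ) → (EuclideanSpace ℝ (Fin d) → ℝ) →
      (EuclideanSpace ℝ (Fin d) → ℝ) → ℝ)
    (ha : ∀ u w v, a u w v =
      ∫ z in QΩ, Gt ((u z.1 - u z.2) / dist z.1 z.2) *
        ((w z.1 - w z.2) * (v z.1 - v z.2)) * (dist z.1 z.2) ^ (-((d:ℝ) + 1 + 2*s)))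
    -- H^α inner product and discrete spaces
    (ip : (EuclideanSpace ℝ (Fin d) → ℝ) → (EuclideanSpace ℝ (Fin d) → ℝ) → ℝ)
    (V0 : Set (EuclideanSpace ℝ (Fin d) → ℝ))
    (τ : ℝ)
    (u0 u1 : EuclideanSpace ℝ (Fin d) → ℝ)
    (hdiff : (fun x => u1 x - u0 x) ∈ V0)
    -- all integrals involved are assumed finite
    (hint0 : IntegrableOn (fun z => F ((u0 z.1 - u0 z.2) / dist z.1 z.2) *
      (dist z.1 z.2) ^ (1 - (d:ℝ) - 2*s)) QΩ)
    (hint1 : IntegrableOn (fun z => F ((u1 z.1 - u1 z.2) / dist z.1 z.2) *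
      (dist z.1 z.2) ^ (1 - (d:ℝ) - 2*s)) QΩ)
    (hinta : IntegrableOn (fun z => Gt ((u0 z.1 - u0 z.2) / dist z.1 z.2) *
      ((u1 z.1 - u1 z.2) * ((u1 z.1 - u0 z.1) - (u1 z.2 - u0 z.2))) *
      (dist z.1 z.2) ^ (-((d:ℝ) + 1 + 2*s))) QΩ)
    -- the semi-implicit gradient flow step
    (hflow : ∀ v ∈ V0, (1/τ) * ip (fun x => u1 x - u0 x) v = - a u0 u1 v) :
    Is u1 + (1/τ) * ip (fun x => u1 x - u0 x) (fun x => u1 x - u0 x) ≤ Is u0 := by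
  set p : ℝ := ((d:ℝ) + 1 + 2*s)/2
  have hp : 0 ≤ p := by have := hs.1; positivity
  have hFg : F = secondPrimitive fun r => (1 + r^2) ^ (-p) := funext fun ρ => by
    rw [hF, secondPrimitive]
    refine integral_congr fun r _ => ?_
    rw [rpow_neg (by positivity), div_eq_mul_inv]
  have hGtg : Gt = segmentMean fun r => (1 + r^2) ^ (-p) := funext fun ρ => by
    rw [hGt, segmentMean, neg_div]
    simp only [mul_pow]
    rfl
  have hkey := secondPrimitive_one_add_sq_rpow_neg_sub_le hp
  rw [← hFg, ← hGtg] at hkey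
  have henergy : Is u1 ≤ Is u0 + a u0 u1 (fun x => u1 x - u0 x) := by
    rw [hIs, hIs, ha, ← integral_add hint0 hinta]
    exact integral_mono hint1 (hint0.add hinta) fun z =>
      mul_rpow_le_of_sub_le hkey (by simp [hF]) u0 u1 z.1 z.2 (by ring)
  linarith [hflow _ hdiff]

theorem gradient_flow_stability (d : ℕ) (hd : 1 ≤ d) (s : ℝ) (hs : s ∈ Set.Ioo (0:ℝ) (1/2))
    (Ω : Set (EuclideanSpace ℝ (Fin d)))
    (F Gt : ℝ → ℝ)
    (hF : ∀ ρ : ℝ, F ρ = ∫ r in (0:ℝ)..ρ, (ρ - r) / (1 + r^2) ^ (((d:ℝ) + 1 + 2*s)/2))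
    (hGt : ∀ ρ : ℝ, Gt ρ = ∫ r in (0:ℝ)..1, (1 + ρ^2 * r^2) ^ (-((d:ℝ) + 1 + 2*s)/2))
    -- QΩ = (ℝ^d × ℝ^d) \ (Ω^c × Ω^c)
    (QΩ : Set (EuclideanSpace ℝ (Fin d) × EuclideanSpace ℝ (Fin d)))
    (hQ : QΩ = {z | z.1 ∈ Ω ∨ z.2 ∈ Ω})
    -- the nonlocal energy and form
    (Is : (EuclideanSpace ℝ (Fin d) → ℝ) → ℝ)
    (hIs : ∀ u, Is u =
      ∫ z in QΩ, F ((u z.1 - u z.2) / dist z.1 z.2) * (dist z.1 z.2) ^ (1 - (d:ℝ) - 2*s))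
    (a : (EuclideanSpace ℝ (Fin d) → ℝ) → (EuclideanSpace ℝ (Fin d) → ℝ) →
      (EuclideanSpace ℝ (Fin d) → ℝ) → ℝ)
    (ha : ∀ u w v, a u w v =
      ∫ z in QΩ, Gt ((u z.1 - u z.2) / dist z.1 z.2) *
        ((w z.1 - w z.2) * (v z.1 - v z.2)) * (dist z.1 z.2) ^ (-((d:ℝ) + 1 + 2*s)))
    -- H^α inner product and discrete spaces
    (ip : (EuclideanSpace ℝ (Fin d) → ℝ) → (EuclideanSpace ℝ (Fin d) → ℝ) → ℝ)
    (V0 : Set (EuclideanSpace ℝ (Fin d) → ℝ))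
    (τ : ℝ) (hτ : 0 < τ)
    (u0 u1 : EuclideanSpace ℝ (Fin d) → ℝ)
    (hdiff : (fun x => u1 x - u0 x) ∈ V0)
    -- all integrals involved are assumed finite
    (hint0 : IntegrableOn (fun z => F ((u0 z.1 - u0 z.2) / dist z.1 z.2) *
      (dist z.1 z.2) ^ (1 - (d:ℝ) - 2*s)) QΩ)
    (hint1 : IntegrableOn (fun z => F ((u1 z.1 - u1 z.2) / dist z.1 z.2) *
      (dist z.1 z.2) ^ (1 - (d:ℝ) - 2*s)) QΩ)
    (hinta : IntegrableOn (fun z => Gt ((u0 z.1 - u0 z.2) / dist z.1 z.2) *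
      ((u1 z.1 - u1 z.2) * ((u1 z.1 - u0 z.1) - (u1 z.2 - u0 z.2))) *
      (dist z.1 z.2) ^ (-((d:ℝ) + 1 + 2*s))) QΩ)
    -- the semi-implicit gradient flow step
    (hflow : ∀ v ∈ V0, (1/τ) * ip (fun x => u1 x - u0 x) v = - a u0 u1 v) :
    Is u1 + (1/τ) * ip (fun x => u1 x - u0 x) (fun x => u1 x - u0 x) ≤ Is u0 :=
  gradient_flow_stability_general d s hs F Gt hF hGt QΩ Is hIs a ha ip V0 τ u0 u1 hdiff hint0 hint1
    hinta hflow
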